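/- For a finite deterministic Markov decision process, the value-iteration stopping criterion gives a suboptimality bound: if V : S → ℝ and θ ≥ 0 satisfy max_{x ∈ S} |(T V)(x) − V(x)| ≤ θ, then max_{x ∈ S} |(T V)(x) − v_*(x)| ≤ λ θ / (1 − λ). -/

import Mathlib

/-- Closed-loop trajectory under a stationary policy. -/
def ctraj {S A : Type*} (f : S → A → S) (pol : S → A) (x : S) : ℕ → S
  | 0 => x
  | t + 1 => f (ctraj f pol x t) (pol (ctraj f pol x t))

/-- Value function of a stationary policy. -/
noncomputable def vpi {S A : Type*} (f : S → A → S) (g : S → A → ℝ) (lam : ℝ)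
    (pol : S → A) (x : S) : ℝ :=
  ∑' t : ℕ, lam ^ t * g (ctraj f pol x t) (pol (ctraj f pol x t))

/-- Optimal value function: minimum over stationary policies. -/
noncomputable def vstar {S A : Type*} (f : S → A → S) (g : S → A → ℝ) (lam : ℝ)
    (x : S) : ℝ :=
  ⨅ pol : S → A, vpi f g lam pol x


/-- Bellman operator. -/
noncomputable def bellman {S A : Type*} (f : S → A → S) (g : S → A → ℝ) (lam : ℝ)
    (V : S → ℝ) (x : S) : ℝ :=
  ⨅ u : A, (g x u + lam * V (f x u))

/-! A fixed point `w` of the Bellman operator `T` is `v_*`: every policy `π` satisfies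
`w ≤ T_π w`, and a policy greedy for `w` satisfies `w = T_π w`. Comparing with
`v_π = T_π v_π` at a state where `v_π - w` (resp. `w - v_π`) is minimal gives `w ≤ v_π`,
with equality for the greedy policy. Since `T` is a `λ`-contraction in the sup norm, the
a priori estimate of the Banach fixed point theorem, applied to one step from `V`, bounds
`‖T V - v_*‖` by `λ ‖T V - V‖ / (1 - λ)`. -/

theorem nonneg_of_mul_comp_le {S : Type*} [Finite S] {lam : ℝ} (hlam0 : 0 ≤ lam)
    (hlam1 : lam < 1) {φ : S → S} {d : S → ℝ} (hd : ∀ x, lam * d (φ x) ≤ d x) (x : S) :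
    0 ≤ d x := by
  have : Nonempty S := ⟨x⟩
  obtain ⟨y, hy⟩ := Finite.exists_min d
  have : lam * d y ≤ d y := (mul_le_mul_of_nonneg_left (hy _) hlam0).trans (hd y)
  nlinarith [hy x]

theorem iSup_abs_sub_eq_dist {S : Type*} [Fintype S] (F G : S → ℝ) :
    ⨆ x, |F x - G x| = dist F G := by
  refine le_antisymm (Real.iSup_le (fun x => ?_) dist_nonneg) ?_
  · rw [← Real.dist_eq]
    exact dist_le_pi_dist F G x
  · rw [dist_pi_le_iff (Real.iSup_nonneg fun _ => abs_nonneg _)]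
    exact fun x => (Real.dist_eq _ _).trans_le
      (le_ciSup (Finite.bddAbove_range fun x => |F x - G x|) x)

section

variable {S A : Type*} (f : S → A → S) (g : S → A → ℝ) (lam : ℝ)

noncomputable def policyBellman (pol : S → A) (V : S → ℝ) (x : S) : ℝ :=
  g x (pol x) + lam * V (f x (pol x))

theorem ctraj_succ' (pol : S → A) (x : S) (t : ℕ) :
    ctraj f pol x (t + 1) = ctraj f pol (f x (pol x)) t := by
  induction t with
  | zero => rfl
  | succ t ih => rw [ctraj, ih, ctraj]

theorem summable_vpi [Finite S] [Finite A] (hlam0 : 0 ≤ lam) (hlam1 : lam < 1)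
    (pol : S → A) (x : S) :
    Summable fun t : ℕ => lam ^ t * g (ctraj f pol x t) (pol (ctraj f pol x t)) := by
  obtain ⟨C, hC⟩ := Finite.exists_le fun p : S × A => |g p.1 p.2|
  refine .of_norm_bounded ((summable_geometric_of_lt_one hlam0 hlam1).mul_right C) fun t => ?_
  rw [Real.norm_eq_abs, abs_mul, abs_pow, abs_of_nonneg hlam0]
  exact mul_le_mul_of_nonneg_left (hC (_, _)) (by positivity)

theorem policyBellman_vpi [Finite S] [Finite A] (hlam0 : 0 ≤ lam) (hlam1 : lam < 1)
    (pol : S → A) : policyBellman f g lam pol (vpi f g lam pol) = vpi f g lam pol := by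
  funext x
  rw [policyBellman, vpi, vpi, (summable_vpi f g lam hlam0 hlam1 pol x).tsum_eq_zero_add,
    ← tsum_mul_left]
  simp only [ctraj_succ', pow_succ', mul_assoc, pow_zero, one_mul]
  rfl

theorem le_of_le_policyBellman_of_policyBellman_le [Finite S] (hlam0 : 0 ≤ lam)
    (hlam1 : lam < 1) {pol : S → A} {w v : S → ℝ}
    (hw : ∀ x, w x ≤ policyBellman f g lam pol w x)
    (hv : ∀ x, policyBellman f g lam pol v x ≤ v x) (x : S) : w x ≤ v x := by
  refine sub_nonneg.mp (nonneg_of_mul_comp_le hlam0 hlam1 (φ := fun y => f y (pol y))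
    (d := v - w) (fun y => ?_) x)
  have := hw y
  have := hv y
  simp only [policyBellman, Pi.sub_apply] at *
  linarith

theorem vpi_eq_of_policyBellman_eq [Finite S] [Finite A] (hlam0 : 0 ≤ lam) (hlam1 : lam < 1)
    {pol : S → A} {w : S → ℝ} (hw : policyBellman f g lam pol w = w) :
    vpi f g lam pol = w := by
  have hv := congrFun (policyBellman_vpi f g lam hlam0 hlam1 pol)
  funext x
  exact le_antisymm
    (le_of_le_policyBellman_of_policyBellman_le f g lam hlam0 hlam1 (fun y => (hv y).ge)
      (fun y => (congrFun hw y).le) x)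
    (le_of_le_policyBellman_of_policyBellman_le f g lam hlam0 hlam1
      (fun y => (congrFun hw y).ge) (fun y => (hv y).le) x)

theorem bellman_le_policyBellman [Finite A] (pol : S → A) (V : S → ℝ) (x : S) :
    bellman f g lam V x ≤ policyBellman f g lam pol V x :=
  ciInf_le (Finite.bddBelow_range _) (pol x)

theorem exists_policyBellman_eq_bellman [Finite A] [Nonempty A] (V : S → ℝ) :
    ∃ pol : S → A, policyBellman f g lam pol V = bellman f g lam V := by
  choose pol hpol using fun x => Finite.exists_min fun u => g x u + lam * V (f x u)
  exact ⟨pol, funext fun x =>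
    le_antisymm (le_ciInf (hpol x)) (bellman_le_policyBellman f g lam pol V x)⟩

theorem vstar_eq_of_isFixedPt [Finite S] [Finite A] [Nonempty A] (hlam0 : 0 ≤ lam)
    (hlam1 : lam < 1) {w : S → ℝ} (hw : Function.IsFixedPt (bellman f g lam) w) :
    vstar f g lam = w := by
  have hle (pol : S → A) (x : S) : w x ≤ vpi f g lam pol x :=
    le_of_le_policyBellman_of_policyBellman_le f g lam hlam0 hlam1
      (fun y => (congrFun hw y).symm.trans_le (bellman_le_policyBellman f g lam pol w y))
      (fun y => (congrFun (policyBellman_vpi f g lam hlam0 hlam1 pol) y).le) x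
  obtain ⟨greedy, hgreedy⟩ := exists_policyBellman_eq_bellman f g lam w
  have hvpi := vpi_eq_of_policyBellman_eq f g lam hlam0 hlam1 (hgreedy.trans hw)
  funext x
  refine le_antisymm ?_ (le_ciInf fun pol => hle pol x)
  exact (ciInf_le ⟨w x, Set.forall_mem_range.2 fun pol => hle pol x⟩ greedy).trans_eq
    (congrFun hvpi x)

theorem bellman_sub_le_dist [Fintype S] [Finite A] [Nonempty A] (hlam0 : 0 ≤ lam)
    (V W : S → ℝ) (x : S) :
    bellman f g lam V x - bellman f g lam W x ≤ lam * dist V W := by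
  rw [sub_le_comm]
  refine le_ciInf fun u => ?_
  have hVW : V (f x u) - W (f x u) ≤ dist V W :=
    (le_abs_self _).trans ((Real.dist_eq _ _).symm.trans_le (dist_le_pi_dist V W _))
  have := bellman_le_policyBellman f g lam (fun _ => u) V x
  rw [policyBellman] at this
  nlinarith

theorem contractingWith_bellman [Fintype S] [Finite A] [Nonempty A] (hlam0 : 0 ≤ lam)
    (hlam1 : lam < 1) : ContractingWith lam.toNNReal (bellman f g lam) := by
  refine ⟨by rwa [← NNReal.coe_lt_coe, Real.coe_toNNReal _ hlam0, NNReal.coe_one], ?_⟩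
  refine LipschitzWith.of_dist_le_mul fun V W => ?_
  rw [Real.coe_toNNReal _ hlam0, dist_pi_le_iff (by positivity)]
  refine fun x => (Real.dist_eq _ _).trans_le (abs_sub_le_iff.2 ⟨?_, ?_⟩)
  · exact bellman_sub_le_dist f g lam hlam0 V W x
  · exact dist_comm V W ▸ bellman_sub_le_dist f g lam hlam0 W V x

end

theorem value_iteration_stopping_criterion_general
    {S A : Type*} [Fintype S] [Fintype A] [Nonempty A]
    (f : S → A → S) (g : S → A → ℝ) (lam : ℝ) (hlam0 : 0 < lam) (hlam1 : lam < 1)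
    (V : S → ℝ) (θ : ℝ)
    (hstop : (⨆ x : S, |bellman f g lam V x - V x|) ≤ θ) :
    (⨆ x : S, |bellman f g lam V x - vstar f g lam x|) ≤ lam * θ / (1 - lam) := by
  have hT := contractingWith_bellman f g lam hlam0.le hlam1
  rw [vstar_eq_of_isFixedPt f g lam hlam0.le hlam1 hT.fixedPoint_isFixedPt,
    iSup_abs_sub_eq_dist]
  rw [iSup_abs_sub_eq_dist, dist_comm] at hstop
  have hapriori := hT.apriori_dist_iterate_fixedPoint_le V 1
  rw [Function.iterate_one, pow_one, Real.coe_toNNReal _ hlam0.le, mul_comm] at hapriori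
  exact hapriori.trans (by gcongr)

theorem value_iteration_stopping_criterion
    {S A : Type*} [Fintype S] [Nonempty S] [Fintype A] [Nonempty A]
    (f : S → A → S) (g : S → A → ℝ) (lam : ℝ) (hlam0 : 0 < lam) (hlam1 : lam < 1)
    (V : S → ℝ) (θ : ℝ) (hθ : 0 ≤ θ)
    (hstop : (⨆ x : S, |bellman f g lam V x - V x|) ≤ θ) :
    (⨆ x : S, |bellman f g lam V x - vstar f g lam x|) ≤ lam * θ / (1 - lam) :=
  value_iteration_stopping_criterion_general f g lam hlam0 hlam1 V θ hstop
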